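/- Let φ(t) := (2π)^{-1/2} e^{-t²/2}, Φ(z) := ∫_{-∞}^{z} φ(t) dt, and for ρ ∈ (−1,1) let h_ρ(x,y) := (2π√(1−ρ²))^{-1} exp(−(x² − 2ρxy + y²)/(2(1−ρ²))) and G(ρ; a, b) := ∫_{-∞}^{a} ∫_{-∞}^{b} h_ρ(x, y) dy dx − Φ(a)Φ(b). Let ε ∈ (0,1) and let ρ : ℤ → ℝ satisfy |ρ_k| ≤ 1 − ε for all k ≠ 0 and ∑_{k∈ℤ, k≠0} |ρ_k|/|k| < ∞. Fix b ∈ ℝ and λ ∈ ℝ. Then for every a ∈ ℝ the complex series S(a) := ∑_{k∈ℤ, k≠0} G(ρ_k; a, b) · (i/k) · (e^{-ikλ} − 1) converges absolutely, and the function a ↦ S(a) is differentiable at every a ∈ ℝ with derivative S'(a) = ∑_{k∈ℤ, k≠0} φ(a) · (Φ((b − ρ_k a)/√(1−ρ_k²)) − Φ(b)) · (i/k) · (e^{-ikλ} − 1), this series also converging absolutely. -/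

import Mathlib

open Real MeasureTheory

/-- The standard normal density `φ(t) = (2π)^{-1/2} e^{-t²/2}`. -/
noncomputable def stdNormalPDF (t : ℝ) : ℝ := (Real.sqrt (2 * π))⁻¹ * Real.exp (-t ^ 2 / 2)

/-- The standard normal distribution function `Φ(z) = ∫_{-∞}^z φ`. -/
noncomputable def stdNormalCDF (z : ℝ) : ℝ := ∫ t in Set.Iic z, stdNormalPDF t

/-- The bivariate standard normal density with correlation `ρ`. -/
noncomputable def biNormPDF (ρ x y : ℝ) : ℝ :=
  (2 * π * Real.sqrt (1 - ρ ^ 2))⁻¹ *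
    Real.exp (-(x ^ 2 - 2 * ρ * x * y + y ^ 2) / (2 * (1 - ρ ^ 2)))

/-- `G(ρ; a, b)`: the bivariate normal joint distribution function minus the product of
its marginals. -/
noncomputable def Gfun (ρ a b : ℝ) : ℝ :=
  (∫ x in Set.Iic a, ∫ y in Set.Iic b, biNormPDF ρ x y) - stdNormalCDF a * stdNormalCDF b

/-!
Integrating out `y` first, `∫_{-∞}^b h_ρ(x, y) dy = φ(x) Φ((b - ρx)/√(1-ρ²))`, so
`G(ρ; a, b) = ∫_{-∞}^a φ(x) (Φ((b - ρx)/√(1-ρ²)) - Φ(b)) dx` and `∂_a G` is this integrand.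
Since `Φ` is Lipschitz and `(b - ρx)/√(1-ρ²) - b = O(|ρ| (|b| + |x|))` for `|ρ| ≤ 1 - ε`,
the integrand is `O(|ρ| e^{-x²/4})` uniformly in `ρ`. Hence both `G(ρ_k; a, b)` and its
`a`-derivative are `O(|ρ_k|)` uniformly in `a`, the `k`-th terms of both series are
`O(|ρ_k|/|k|)`, and termwise differentiation of a uniformly dominated series applies.
-/

lemma stdNormalPDF_nonneg (t : ℝ) : 0 ≤ stdNormalPDF t := by
  unfold stdNormalPDF
  positivity

lemma stdNormalPDF_le (t : ℝ) : stdNormalPDF t ≤ (√(2 * π))⁻¹ := by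
  unfold stdNormalPDF
  exact mul_le_of_le_one_right (by positivity) (exp_le_one_iff.2 (by nlinarith [sq_nonneg t]))

lemma continuous_stdNormalPDF : Continuous stdNormalPDF := by
  unfold stdNormalPDF
  fun_prop

lemma integrable_exp_neg_sq_div {c : ℝ} (hc : 0 < c) :
    Integrable fun x : ℝ => exp (-x ^ 2 / c) :=
  (integrable_exp_neg_mul_sq (inv_pos.2 hc)).congr
    (Filter.Eventually.of_forall fun x => by ring_nf)

lemma integrable_stdNormalPDF : Integrable stdNormalPDF :=
  (integrable_exp_neg_sq_div two_pos).const_mul _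

lemma hasDerivAt_setIntegral_Iic {E : Type*} [NormedAddCommGroup E] [NormedSpace ℝ E]
    [CompleteSpace E] {g : ℝ → E} (hc : Continuous g) (hi : Integrable g) (a : ℝ) :
    HasDerivAt (fun u => ∫ x in Set.Iic u, g x) (g a) a := by
  have split : (fun u => ∫ x in Set.Iic u, g x)
      = fun u => (∫ x in Set.Iic 0, g x) + ∫ x in (0 : ℝ)..u, g x := by
    ext u
    rw [← intervalIntegral.integral_Iic_sub_Iic hi.integrableOn hi.integrableOn,
      add_sub_cancel]
  rw [split]
  exact (intervalIntegral.integral_hasDerivAt_right hi.intervalIntegrable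
    (hc.stronglyMeasurableAtFilter _ _) hc.continuousAt).const_add _

lemma hasDerivAt_stdNormalCDF (z : ℝ) : HasDerivAt stdNormalCDF (stdNormalPDF z) z :=
  hasDerivAt_setIntegral_Iic continuous_stdNormalPDF integrable_stdNormalPDF z

lemma continuous_stdNormalCDF : Continuous stdNormalCDF :=
  continuous_iff_continuousAt.2 fun z => (hasDerivAt_stdNormalCDF z).continuousAt

lemma stdNormalCDF_nonneg (z : ℝ) : 0 ≤ stdNormalCDF z :=
  setIntegral_nonneg measurableSet_Iic fun t _ => stdNormalPDF_nonneg t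

lemma stdNormalCDF_le_integral (z : ℝ) : stdNormalCDF z ≤ ∫ t, stdNormalPDF t :=
  setIntegral_le_integral integrable_stdNormalPDF
    (Filter.Eventually.of_forall stdNormalPDF_nonneg)

lemma abs_stdNormalCDF_sub_le (u v : ℝ) :
    |stdNormalCDF u - stdNormalCDF v| ≤ (√(2 * π))⁻¹ * |u - v| := by
  simpa only [Real.norm_eq_abs] using
    Convex.norm_image_sub_le_of_norm_hasDerivWithin_le (s := Set.univ)
      (fun x _ => (hasDerivAt_stdNormalCDF x).hasDerivWithinAt)
      (fun x _ => by
        rw [Real.norm_eq_abs, abs_of_nonneg (stdNormalPDF_nonneg x)]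
        exact stdNormalPDF_le x)
      convex_univ (Set.mem_univ v) (Set.mem_univ u)

lemma integrable_stdNormalPDF_mul_stdNormalCDF_comp {c : ℝ → ℝ} (hc : Continuous c) :
    Integrable fun x => stdNormalPDF x * stdNormalCDF (c x) := by
  have hT : 0 ≤ ∫ t, stdNormalPDF t := integral_nonneg stdNormalPDF_nonneg
  refine (integrable_stdNormalPDF.mul_const (∫ t, stdNormalPDF t)).mono
    (continuous_stdNormalPDF.mul (continuous_stdNormalCDF.comp hc)).aestronglyMeasurable
    (Filter.Eventually.of_forall fun x => ?_)
  rw [norm_mul, norm_mul, Real.norm_eq_abs, Real.norm_eq_abs, Real.norm_eq_abs,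
    abs_of_nonneg (stdNormalCDF_nonneg _), abs_of_nonneg hT]
  exact mul_le_mul_of_nonneg_left (stdNormalCDF_le_integral _) (abs_nonneg _)

lemma stdNormalPDF_mul_le (b x : ℝ) :
    stdNormalPDF x * (|b| + |x|) ≤ (√(2 * π))⁻¹ * ((|b| + 1) * exp (-x ^ 2 / 4)) := by
  have hsplit : exp (-x ^ 2 / 2) = exp (-x ^ 2 / 4) * exp (-x ^ 2 / 4) := by
    rw [← exp_add]; ring_nf
  have hle_one : exp (-x ^ 2 / 4) ≤ 1 := exp_le_one_iff.2 (by nlinarith [sq_nonneg x])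
  -- `|x| ≤ 1 + x²/4 ≤ e^{x²/4}`
  have habs : |x| * exp (-x ^ 2 / 4) ≤ 1 := by
    have h : |x| ≤ exp (x ^ 2 / 4) := by
      nlinarith [add_one_le_exp (x ^ 2 / 4), sq_abs x, sq_nonneg (|x| - 2)]
    calc |x| * exp (-x ^ 2 / 4) ≤ exp (x ^ 2 / 4) * exp (-x ^ 2 / 4) := by gcongr
      _ = 1 := by rw [← exp_add, neg_div, add_neg_cancel, exp_zero]
  have hpos := exp_pos (-x ^ 2 / 4)
  rw [stdNormalPDF, hsplit, mul_assoc]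
  gcongr _ * ?_
  nlinarith [mul_le_mul_of_nonneg_left hle_one (abs_nonneg b)]

lemma biNormPDF_eq_mul {ρ : ℝ} (hρ : |ρ| < 1) (x y : ℝ) :
    biNormPDF ρ x y
      = stdNormalPDF x * ((√(1 - ρ ^ 2))⁻¹ * stdNormalPDF ((y - ρ * x) / √(1 - ρ ^ 2))) := by
  have h1 : 0 < 1 - ρ ^ 2 := by nlinarith [sq_abs ρ, abs_nonneg ρ]
  have hsq : √(2 * π) * √(2 * π) = 2 * π := mul_self_sqrt (by positivity)
  have hexp : -x ^ 2 / 2 + -((y - ρ * x) / √(1 - ρ ^ 2)) ^ 2 / 2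
      = -(x ^ 2 - 2 * ρ * x * y + y ^ 2) / (2 * (1 - ρ ^ 2)) := by
    rw [div_pow, sq_sqrt h1.le]
    field_simp
    ring
  unfold biNormPDF stdNormalPDF
  rw [← hexp, exp_add, show (2 * π * √(1 - ρ ^ 2))⁻¹
      = (√(2 * π))⁻¹ * (√(2 * π))⁻¹ * (√(1 - ρ ^ 2))⁻¹ by rw [← mul_inv, hsq, mul_inv]]
  ring

lemma setIntegral_Iic_comp_sub_div {E : Type*} [NormedAddCommGroup E] [NormedSpace ℝ E]
    (f : ℝ → E) {s : ℝ} (hs : 0 < s) (μ b : ℝ) :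
    ∫ y in Set.Iic b, f ((y - μ) / s) = s • ∫ t in Set.Iic ((b - μ) / s), f t := by
  set g := (Set.Iic ((b - μ) / s)).indicator f
  have hind : (Set.Iic b).indicator (fun y => f ((y - μ) / s)) = fun y => g ((y - μ) / s) := by
    ext y
    have hiff : (y - μ) / s ≤ (b - μ) / s ↔ y ≤ b := by
      rw [div_le_div_iff_of_pos_right hs, sub_le_sub_iff_right]
    by_cases h : y ≤ b <;> simp [g, Set.indicator, hiff, h]
  calc ∫ y in Set.Iic b, f ((y - μ) / s)
      = ∫ y, g ((y - μ) / s) := by rw [← integral_indicator measurableSet_Iic, hind]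
    _ = ∫ z, g (z / s) := integral_sub_right_eq_self (fun z => g (z / s)) μ
    _ = s • ∫ t in Set.Iic ((b - μ) / s), f t := by
        rw [Measure.integral_comp_div g s, abs_of_pos hs, integral_indicator measurableSet_Iic]

lemma setIntegral_Iic_biNormPDF {ρ : ℝ} (hρ : |ρ| < 1) (b x : ℝ) :
    ∫ y in Set.Iic b, biNormPDF ρ x y
      = stdNormalPDF x * stdNormalCDF ((b - ρ * x) / √(1 - ρ ^ 2)) := by
  have hs : 0 < √(1 - ρ ^ 2) := sqrt_pos.2 (by nlinarith [sq_abs ρ, abs_nonneg ρ])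
  simp_rw [biNormPDF_eq_mul hρ, integral_const_mul,
    setIntegral_Iic_comp_sub_div stdNormalPDF hs, smul_eq_mul, stdNormalCDF]
  field_simp

/-- The partial derivative `∂_a G(ρ; a, b)`, evaluated at `a = x`. -/
noncomputable def GfunDeriv (ρ b x : ℝ) : ℝ :=
  stdNormalPDF x * (stdNormalCDF ((b - ρ * x) / √(1 - ρ ^ 2)) - stdNormalCDF b)

lemma continuous_GfunDeriv (ρ b : ℝ) : Continuous (GfunDeriv ρ b) := by
  unfold GfunDeriv
  exact continuous_stdNormalPDF.mul
    ((continuous_stdNormalCDF.comp (by fun_prop)).sub continuous_const)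

lemma Gfun_eq_setIntegral_Iic_GfunDeriv {ρ : ℝ} (hρ : |ρ| < 1) (a b : ℝ) :
    Gfun ρ a b = ∫ x in Set.Iic a, GfunDeriv ρ b x := by
  have hc : Continuous fun x : ℝ => (b - ρ * x) / √(1 - ρ ^ 2) := by fun_prop
  have hprod : stdNormalCDF a * stdNormalCDF b
      = ∫ x in Set.Iic a, stdNormalPDF x * stdNormalCDF b := by
    rw [stdNormalCDF, integral_mul_const]
  unfold Gfun GfunDeriv
  simp_rw [setIntegral_Iic_biNormPDF hρ, hprod, mul_sub]
  exact (integral_sub (integrable_stdNormalPDF_mul_stdNormalCDF_comp hc).integrableOn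
    (integrable_stdNormalPDF_mul_stdNormalCDF_comp continuous_const).integrableOn).symm

lemma abs_div_sqrt_one_sub_sq_sub_le {r ρ : ℝ} (hr : r < 1) (hρ : |ρ| ≤ r) (b x : ℝ) :
    |(b - ρ * x) / √(1 - ρ ^ 2) - b| ≤ |ρ| * (|b| + |x|) / √(1 - r ^ 2) := by
  have hρ1 : |ρ| < 1 := hρ.trans_lt hr
  have h1 : 0 < 1 - ρ ^ 2 := by nlinarith [sq_abs ρ, abs_nonneg ρ]
  set s := √(1 - ρ ^ 2)
  have hs2 : s ^ 2 = 1 - ρ ^ 2 := sq_sqrt h1.le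
  have hs : 0 < s := sqrt_pos.2 h1
  have hs1 : s ≤ 1 := by nlinarith
  have hrs : √(1 - r ^ 2) ≤ s := sqrt_le_sqrt (by nlinarith [sq_abs ρ, abs_nonneg ρ])
  have hr0 : 0 < √(1 - r ^ 2) := sqrt_pos.2 (by nlinarith [abs_nonneg ρ])
  -- `1 - s ≤ 1 - s² = ρ² ≤ |ρ|`
  have h1s : 1 - s ≤ |ρ| := by nlinarith [sq_abs ρ, abs_nonneg ρ]
  have hnum : |b * (1 - s) - ρ * x| ≤ |ρ| * (|b| + |x|) :=
    calc |b * (1 - s) - ρ * x| ≤ |b| * (1 - s) + |ρ| * |x| := by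
          simpa only [abs_mul, abs_of_nonneg (sub_nonneg.2 hs1)] using abs_sub (b * (1 - s)) (ρ * x)
      _ ≤ |b| * |ρ| + |ρ| * |x| := by gcongr
      _ = |ρ| * (|b| + |x|) := by ring
  rw [show (b - ρ * x) / s - b = (b * (1 - s) - ρ * x) / s by field_simp; ring,
    abs_div, abs_of_pos hs]
  exact div_le_div₀ (by positivity) hnum hr0 hrs

lemma exists_abs_GfunDeriv_le {r : ℝ} (hr : r < 1) (b : ℝ) :
    ∃ C, 0 ≤ C ∧ ∀ ρ, |ρ| ≤ r → ∀ x, |GfunDeriv ρ b x| ≤ C * |ρ| * exp (-x ^ 2 / 4) := by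
  set L := (√(2 * π))⁻¹
  refine ⟨L * L * (|b| + 1) / √(1 - r ^ 2), by positivity, fun ρ hρ x => ?_⟩
  calc |GfunDeriv ρ b x|
      = stdNormalPDF x * |stdNormalCDF ((b - ρ * x) / √(1 - ρ ^ 2)) - stdNormalCDF b| := by
        rw [GfunDeriv, abs_mul, abs_of_nonneg (stdNormalPDF_nonneg x)]
    _ ≤ stdNormalPDF x * (L * (|ρ| * (|b| + |x|) / √(1 - r ^ 2))) := by
        gcongr
        · exact stdNormalPDF_nonneg x
        · exact (abs_stdNormalCDF_sub_le _ _).trans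
            (by gcongr; exact abs_div_sqrt_one_sub_sq_sub_le hr hρ b x)
    _ = L * |ρ| / √(1 - r ^ 2) * (stdNormalPDF x * (|b| + |x|)) := by ring
    _ ≤ L * |ρ| / √(1 - r ^ 2) * (L * ((|b| + 1) * exp (-x ^ 2 / 4))) :=
        mul_le_mul_of_nonneg_left (stdNormalPDF_mul_le b x) (by positivity)
    _ = L * L * (|b| + 1) / √(1 - r ^ 2) * |ρ| * exp (-x ^ 2 / 4) := by ring

lemma integrable_GfunDeriv {ρ : ℝ} (hρ : |ρ| < 1) (b : ℝ) : Integrable (GfunDeriv ρ b) := by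
  obtain ⟨C, -, hC⟩ := exists_abs_GfunDeriv_le hρ b
  refine ((integrable_exp_neg_sq_div four_pos).const_mul (C * |ρ|)).mono
    (continuous_GfunDeriv ρ b).aestronglyMeasurable (Filter.Eventually.of_forall fun x => ?_)
  rw [Real.norm_eq_abs, Real.norm_eq_abs]
  exact (hC ρ le_rfl x).trans (le_abs_self _)

lemma hasDerivAt_Gfun {ρ : ℝ} (hρ : |ρ| < 1) (a b : ℝ) :
    HasDerivAt (fun a => Gfun ρ a b) (GfunDeriv ρ b a) a := by
  simp_rw [Gfun_eq_setIntegral_Iic_GfunDeriv hρ]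
  exact hasDerivAt_setIntegral_Iic (continuous_GfunDeriv ρ b) (integrable_GfunDeriv hρ b) a

lemma exists_abs_Gfun_le_and_abs_GfunDeriv_le {r : ℝ} (hr : r < 1) (b : ℝ) :
    ∃ C, 0 ≤ C ∧ ∀ ρ, |ρ| ≤ r → ∀ a, |Gfun ρ a b| ≤ C * |ρ| ∧ |GfunDeriv ρ b a| ≤ C * |ρ| := by
  obtain ⟨C, hC0, hC⟩ := exists_abs_GfunDeriv_le hr b
  set I := ∫ x, exp (-x ^ 2 / 4)
  have hI : 0 ≤ I := integral_nonneg fun x => (exp_pos _).le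
  refine ⟨C * (1 + I), by positivity, fun ρ hρ a => ⟨?_, ?_⟩⟩
  · have hint := (integrable_exp_neg_sq_div four_pos).const_mul (C * |ρ|)
    calc |Gfun ρ a b| = ‖∫ x in Set.Iic a, GfunDeriv ρ b x‖ := by
          rw [Gfun_eq_setIntegral_Iic_GfunDeriv (hρ.trans_lt hr), Real.norm_eq_abs]
      _ ≤ ∫ x in Set.Iic a, C * |ρ| * exp (-x ^ 2 / 4) :=
          norm_integral_le_of_norm_le hint.integrableOn
            (Filter.Eventually.of_forall fun x => hC ρ hρ x)
      _ ≤ ∫ x, C * |ρ| * exp (-x ^ 2 / 4) :=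
          setIntegral_le_integral hint (Filter.Eventually.of_forall fun x => by positivity)
      _ = C * |ρ| * I := integral_const_mul _ _
      _ ≤ C * (1 + I) * |ρ| := by nlinarith [abs_nonneg ρ, mul_nonneg hC0 (abs_nonneg ρ)]
  · calc |GfunDeriv ρ b a| ≤ C * |ρ| * exp (-a ^ 2 / 4) := hC ρ hρ a
      _ ≤ C * |ρ| * 1 := by
          gcongr
          exact exp_le_one_iff.2 (by nlinarith [sq_nonneg a])
      _ ≤ C * (1 + I) * |ρ| := by nlinarith [abs_nonneg ρ, mul_nonneg hC0 (abs_nonneg ρ)]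

lemma summable_norm_and_hasDerivAt_tsum {ι 𝕜 F : Type*} [RCLike 𝕜] [NormedAddCommGroup F]
    [NormedSpace 𝕜 F] [CompleteSpace F] {g g' : ι → 𝕜 → F} {u : ι → ℝ} (hu : Summable u)
    (hg : ∀ k y, HasDerivAt (g k) (g' k y) y) (hgu : ∀ k y, ‖g k y‖ ≤ u k)
    (hg'u : ∀ k y, ‖g' k y‖ ≤ u k) :
    (∀ y, Summable fun k => ‖g k y‖) ∧
      ∀ y, (Summable fun k => ‖g' k y‖) ∧
        HasDerivAt (fun z => ∑' k, g k z) (∑' k, g' k y) y := by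
  have hsum : ∀ y, Summable fun k => ‖g k y‖ := fun y =>
    hu.of_nonneg_of_le (fun k => norm_nonneg _) (hgu · y)
  exact ⟨hsum, fun y => ⟨hu.of_nonneg_of_le (fun k => norm_nonneg _) (hg'u · y),
    hasDerivAt_tsum hu hg hg'u (hsum y).of_norm y⟩⟩

lemma norm_ofReal_mul_I_div_mul_exp_sub_one_le (X lam : ℝ) (k : ℤ) :
    ‖(X : ℂ) * (Complex.I / (k : ℂ)) * (Complex.exp (-Complex.I * (k : ℂ) * (lam : ℂ)) - 1)‖
      ≤ 2 * (|X| / |(k : ℝ)|) := by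
  have hexp : ‖Complex.exp (-Complex.I * (k : ℂ) * (lam : ℂ))‖ = 1 := by
    rw [show -Complex.I * (k : ℂ) * (lam : ℂ) = ((-(k * lam) : ℝ) : ℂ) * Complex.I by
      push_cast; ring]
    exact Complex.norm_exp_ofReal_mul_I _
  have hdiff : ‖Complex.exp (-Complex.I * (k : ℂ) * (lam : ℂ)) - 1‖ ≤ 2 :=
    (norm_sub_le _ _).trans (by rw [hexp, norm_one]; norm_num)
  rw [norm_mul, norm_mul, norm_div, Complex.norm_I, Complex.norm_real, Complex.norm_intCast,
    Real.norm_eq_abs]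
  calc |X| * (1 / |(k : ℝ)|) * ‖Complex.exp (-Complex.I * (k : ℂ) * (lam : ℂ)) - 1‖
      ≤ |X| * (1 / |(k : ℝ)|) * 2 := by gcongr
    _ = 2 * (|X| / |(k : ℝ)|) := by ring

/-- under `|ρ_k| ≤ 1 - ε` and `∑_{k≠0} |ρ_k|/|k| < ∞`, for fixed `b, λ`,
the series `S(a) = ∑_{k≠0} G(ρ_k; a, b)(i/k)(e^{-ikλ} - 1)` converges absolutely for
every `a`, and `a ↦ S(a)` is differentiable with derivative given by the (absolutely
convergent) termwise-differentiated series. -/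
theorem stmt18 (ε : ℝ) (hε : ε ∈ Set.Ioo (0 : ℝ) 1) (ρ : ℤ → ℝ)
    (h1 : ∀ k : ℤ, k ≠ 0 → |ρ k| ≤ 1 - ε)
    (h2 : Summable fun k : {k : ℤ // k ≠ 0} => |ρ (k : ℤ)| / |((k : ℤ) : ℝ)|)
    (b lam : ℝ) :
    (∀ a : ℝ, Summable fun k : {k : ℤ // k ≠ 0} =>
      ‖((Gfun (ρ (k : ℤ)) a b : ℝ) : ℂ) * (Complex.I / ((k : ℤ) : ℂ)) *
        (Complex.exp (-Complex.I * ((k : ℤ) : ℂ) * (lam : ℂ)) - 1)‖) ∧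
    (∀ a : ℝ,
      (Summable fun k : {k : ℤ // k ≠ 0} =>
        ‖((stdNormalPDF a *
              (stdNormalCDF ((b - ρ (k : ℤ) * a) / Real.sqrt (1 - ρ (k : ℤ) ^ 2)) -
                stdNormalCDF b) : ℝ) : ℂ) *
            (Complex.I / ((k : ℤ) : ℂ)) *
            (Complex.exp (-Complex.I * ((k : ℤ) : ℂ) * (lam : ℂ)) - 1)‖) ∧
      HasDerivAt
        (fun a : ℝ => ∑' k : {k : ℤ // k ≠ 0},
          ((Gfun (ρ (k : ℤ)) a b : ℝ) : ℂ) * (Complex.I / ((k : ℤ) : ℂ)) *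
            (Complex.exp (-Complex.I * ((k : ℤ) : ℂ) * (lam : ℂ)) - 1))
        (∑' k : {k : ℤ // k ≠ 0},
          ((stdNormalPDF a *
              (stdNormalCDF ((b - ρ (k : ℤ) * a) / Real.sqrt (1 - ρ (k : ℤ) ^ 2)) -
                stdNormalCDF b) : ℝ) : ℂ) *
            (Complex.I / ((k : ℤ) : ℂ)) *
            (Complex.exp (-Complex.I * ((k : ℤ) : ℂ) * (lam : ℂ)) - 1)) a) := by
  have hr : 1 - ε < 1 := by linarith [hε.1]
  obtain ⟨C, hC0, hC⟩ := exists_abs_Gfun_le_and_abs_GfunDeriv_le hr b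
  have hbound : ∀ (k : {k : ℤ // k ≠ 0}) (X : ℝ), |X| ≤ C * |ρ k| →
      ‖(X : ℂ) * (Complex.I / ((k : ℤ) : ℂ)) *
        (Complex.exp (-Complex.I * ((k : ℤ) : ℂ) * (lam : ℂ)) - 1)‖
        ≤ 2 * C * (|ρ k| / |((k : ℤ) : ℝ)|) := fun k X hX =>
    calc _ ≤ 2 * (|X| / |((k : ℤ) : ℝ)|) := norm_ofReal_mul_I_div_mul_exp_sub_one_le X lam k
      _ ≤ 2 * (C * |ρ k| / |((k : ℤ) : ℝ)|) := by gcongr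
      _ = 2 * C * (|ρ k| / |((k : ℤ) : ℝ)|) := by ring
  exact summable_norm_and_hasDerivAt_tsum (h2.mul_left (2 * C))
    (fun k a => ((hasDerivAt_Gfun ((h1 k k.2).trans_lt hr) a b).ofReal_comp.mul_const _).mul_const _)
    (fun k a => hbound k _ (hC _ (h1 k k.2) a).1)
    (fun k a => hbound k _ (hC _ (h1 k k.2) a).2)
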